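/- arXiv:1307.3290 — 10 statements merged into one kernel-verified Lean document; each statement's English description precedes it below -/
import Mathlib

section
/- Let P, E-bounds and noise levels be as follows: σz2 > 0, σn2 > 0, P > 0. Suppose that for every positive integer L we are given E_L ≥ 0, vectors g_L, q_L ∈ ℝ^L with q_L ≠ 0, and a strictly lower triangular matrix F_L ∈ ℝ^{L×L} satisfying the power constraint g_Lᵀg_L·E_L + (σz2 + σn2)·‖F_L‖_F² ≤ L·P. Define SNR(L) = ((q_Lᵀg_L)²·E_L) / (σz2·‖q_Lᵀ(I + F_L)‖² + σn2·‖q_LᵀF_L‖²). Then lim_{L→∞} (1/(2L))·log₂(1 + SNR(L)) = 0. -/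
open Filter Asymptotics

/-!
Write `w = q F`, so that the decoder sees `q (I + F) = q + w`. Coordinatewise,
`(a + b) (a (x + y)² + b y²) - a b x² = (a (x + y) + b y)² ≥ 0`, so the noise term of the
SNR is at least `σz2 σn2 / (σz2 + σn2) · ‖q‖²` however the feedback matrix is chosen.
Together with Cauchy–Schwarz `(q · g)² ≤ ‖q‖² ‖g‖²` and the power constraint, this gives
`SNR(L) ≤ C L` for a constant `C`, and `log (1 + C L) / L → 0`.
-/

lemma mul_div_add_mul_sq_le {a b : ℝ} (ha : 0 < a) (hb : 0 < b) (x y : ℝ) :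
    a * b / (a + b) * x ^ 2 ≤ a * (x + y) ^ 2 + b * y ^ 2 := by
  rw [div_mul_eq_mul_div, div_le_iff₀ (by positivity)]
  nlinarith [sq_nonneg (a * (x + y) + b * y)]

lemma mul_div_add_mul_sum_sq_le {ι : Type*} [Fintype ι] {a b : ℝ} (ha : 0 < a) (hb : 0 < b)
    (x y : ι → ℝ) :
    a * b / (a + b) * ∑ i, x i ^ 2 ≤ a * ∑ i, (x i + y i) ^ 2 + b * ∑ i, y i ^ 2 := by
  rw [Finset.mul_sum, Finset.mul_sum, Finset.mul_sum, ← Finset.sum_add_distrib]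
  exact Finset.sum_le_sum fun i _ => mul_div_add_mul_sq_le ha hb (x i) (y i)

lemma snr_le {ι : Type*} [Fintype ι] [DecidableEq ι] {σz2 σn2 E B : ℝ} (hz : 0 < σz2) (hn : 0 < σn2)
    (hE : 0 ≤ E) (q g : ι → ℝ) (F : Matrix ι ι ℝ) (hpow : (∑ i, g i * g i) * E ≤ B) :
    (∑ i, q i * g i) ^ 2 * E /
        (σz2 * ∑ j, Matrix.vecMul q (1 + F) j ^ 2 + σn2 * ∑ j, Matrix.vecMul q F j ^ 2)
      ≤ B / (σz2 * σn2 / (σz2 + σn2)) := by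
  set lam := σz2 * σn2 / (σz2 + σn2)
  have hlam : 0 < lam := by positivity
  have hnoise : lam * ∑ i, q i ^ 2 ≤
      σz2 * ∑ j, Matrix.vecMul q (1 + F) j ^ 2 + σn2 * ∑ j, Matrix.vecMul q F j ^ 2 := by
    simpa only [Matrix.vecMul_add, Matrix.vecMul_one, Pi.add_apply]
      using mul_div_add_mul_sum_sq_le hz hn q (Matrix.vecMul q F)
  have hB : 0 ≤ B :=
    le_trans (mul_nonneg (Finset.sum_nonneg fun i _ => mul_self_nonneg (g i)) hE) hpow
  have hcs : (∑ i, q i * g i) ^ 2 ≤ (∑ i, q i ^ 2) * ∑ i, g i * g i := by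
    simpa only [sq] using Finset.sum_mul_sq_le_sq_mul_sq Finset.univ q g
  refine div_le_of_le_mul₀ (by positivity) (by positivity) ?_
  calc (∑ i, q i * g i) ^ 2 * E
      ≤ (∑ i, q i ^ 2) * ((∑ i, g i * g i) * E) := by
        rw [← mul_assoc]; exact mul_le_mul_of_nonneg_right hcs hE
    _ ≤ (∑ i, q i ^ 2) * B := mul_le_mul_of_nonneg_left hpow (by positivity)
    _ = B / lam * (lam * ∑ i, q i ^ 2) := by field_simp
    _ ≤ _ := mul_le_mul_of_nonneg_left hnoise (by positivity)

lemma tendsto_log_one_add_mul_div_atTop {C : ℝ} (hC : 0 < C) :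
    Tendsto (fun x : ℝ => Real.log (1 + C * x) / x) atTop (nhds 0) := by
  have hlin : (fun x : ℝ => 1 + C * x) =O[atTop] id :=
    (isLittleO_const_id_atTop 1).isBigO.add (isBigO_const_mul_self C id atTop)
  have htop : Tendsto (fun x : ℝ => 1 + C * x) atTop atTop :=
    tendsto_atTop_add_const_left _ 1 (tendsto_id.const_mul_atTop hC)
  exact ((Real.isLittleO_log_id_atTop.comp_tendsto htop).trans_isBigO hlin).tendsto_div_nhds_zero

lemma tendsto_rate_of_le_mul {s : ℕ → ℝ} {C : ℝ} (hC : 0 < C)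
    (hs : ∀ᶠ L in atTop, 0 ≤ s L ∧ s L ≤ C * L) :
    Tendsto (fun L : ℕ => 1 / (2 * (L : ℝ)) * Real.logb 2 (1 + s L)) atTop (nhds 0) := by
  have hlim : Tendsto (fun L : ℕ => 1 / (2 * (L : ℝ)) * Real.logb 2 (1 + C * L))
      atTop (nhds 0) := by
    simpa [Function.comp_def, Real.logb, div_eq_mul_inv, mul_comm, mul_left_comm, mul_assoc]
      using ((tendsto_log_one_add_mul_div_atTop hC).comp
        tendsto_natCast_atTop_atTop).mul_const (1 / (2 * Real.log 2))
  refine squeeze_zero' ?_ ?_ hlim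
  · filter_upwards [hs] with L ⟨h0, _⟩
    have := Real.logb_nonneg one_lt_two (le_add_of_nonneg_right h0)
    positivity
  · filter_upwards [hs] with L ⟨h0, h1⟩
    refine mul_le_mul_of_nonneg_left ?_ (by positivity)
    exact Real.logb_le_logb_of_le one_lt_two (by linarith) (by linarith)

theorem stmt_1_general (σz2 σn2 P : ℝ) (hz : 0 < σz2) (hn : 0 < σn2) (hP : 0 < P)
    (E : ℕ → ℝ) (g q : (L : ℕ) → Fin L → ℝ)
    (F : (L : ℕ) → Matrix (Fin L) (Fin L) ℝ)
    (hE : ∀ L, 0 ≤ E L)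
    (hpow : ∀ L, 0 < L →
      (∑ i, g L i * g L i) * E L + (σz2 + σn2) * (∑ i, ∑ j, (F L i j) ^ 2)
        ≤ (L : ℝ) * P) :
    Tendsto (fun L : ℕ =>
        (1 / (2 * (L : ℝ))) * Real.logb 2 (1 +
          ((∑ i, q L i * g L i) ^ 2 * E L) /
            (σz2 * (∑ j, (Matrix.vecMul (q L) (1 + F L) j) ^ 2)
              + σn2 * (∑ j, (Matrix.vecMul (q L) (F L) j) ^ 2))))
      atTop (nhds 0) := by
  refine tendsto_rate_of_le_mul (C := P / (σz2 * σn2 / (σz2 + σn2))) (by positivity) ?_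
  filter_upwards [eventually_gt_atTop 0] with L hL
  have hpowL : (∑ i, g L i * g L i) * E L ≤ L * P :=
    le_trans (le_add_of_nonneg_right (by positivity)) (hpow L hL)
  refine ⟨by have := hE L; positivity, ?_⟩
  rw [mul_comm _ (L : ℝ), mul_div_assoc']
  exact snr_le hz hn (hE L) (q L) (g L) (F L) hpowL

/-- If for every blocklength `L` a linear feedback code
(`g_L`, strictly lower triangular `F_L`, decoder `q_L ≠ 0`, message power `E_L`)
satisfies the power constraint, then the rate bound
`(1/(2L))·log₂(1 + SNR(L))` tends to `0`: linear feedback schemes achieve only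
zero rate when the feedback noise variance `σn2` is strictly positive. -/
theorem stmt_1 (σz2 σn2 P : ℝ) (hz : 0 < σz2) (hn : 0 < σn2) (hP : 0 < P)
    (E : ℕ → ℝ) (g q : (L : ℕ) → Fin L → ℝ)
    (F : (L : ℕ) → Matrix (Fin L) (Fin L) ℝ)
    (hE : ∀ L, 0 ≤ E L)
    (hq : ∀ L, 0 < L → q L ≠ 0)
    (hF : ∀ L, ∀ i j : Fin L, i ≤ j → F L i j = 0)
    (hpow : ∀ L, 0 < L →
      (∑ i, g L i * g L i) * E L + (σz2 + σn2) * (∑ i, ∑ j, (F L i j) ^ 2)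
        ≤ (L : ℝ) * P) :
    Tendsto (fun L : ℕ =>
        (1 / (2 * (L : ℝ))) * Real.logb 2 (1 +
          ((∑ i, q L i * g L i) ^ 2 * E L) /
            (σz2 * (∑ j, (Matrix.vecMul (q L) (1 + F L) j) ^ 2)
              + σn2 * (∑ j, (Matrix.vecMul (q L) (F L) j) ^ 2))))
      atTop (nhds 0) :=
  stmt_1_general σz2 σn2 P hz hn hP E g q F hE hpow
end

section
/- Let K ≥ 2 and L̃ ≥ 1 be integers and β a nonzero real number. Let c_1, …, c_K : ZMod K → ℝ take values in {−1, 1} and be pairwise orthogonal: Σ_{s ∈ ZMod K} c_i(s)·c_j(s) = 0 whenever i ≠ j. Index ℝ^{L̃} and L̃×L̃ matrices by {0, 1, …, L̃−1}. Let C_k be the diagonal matrix with (C_k)_{ll} = c_k(l mod K), and let q ∈ ℝ^{L̃} have entries q_l = β^{2l}. Let F ∈ ℝ^{L̃×L̃} be any matrix of the following form: for each column j ∈ {0,…,L̃−1}, set M_j = ⌊(L̃−1−j)/K⌋, and for each m ∈ {0,…,M_j−1} choose an arbitrary real coefficient μ_{j,m}; the entries of column j of F are F_{j+mK+1+r, j}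 = μ_{j,m}·β^{−2r} for r ∈ {0,…,K−1} and m ∈ {0,…,M_j−1}, and all other entries of column j are zero. Then for all k ≠ i in {1,…,K}, the row vector qᵀ C_k C_i F is identically zero; in particular Σ_{i≠k} ‖qᵀ C_k C_i F‖² = 0. -/
/-! On the block `n = j + 1 + mK + r`, `r < K`, of column `j` of `F`, the weight `β^{2n}` of `q`
cancels the factor `β^{-2r}`, so the block contributes `μ_{j,m} β^{2(j+1+mK)}` times the sum of
`c_k c_i` over a full period of residues mod `K`, which vanishes by orthogonality. -/

/-- The feedback matrix built from `K`-periodic scaled copies of the reverse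
geometric vector `f = (1, β⁻², …, β^{-2(K-1)})` placed below the main diagonal:
column `j` consists of `M_j = ⌊(L-1-j)/K⌋` copies of `f`, the `m`-th copy scaled
by the arbitrary coefficient `μ j m` and occupying rows `j+mK+1+r`,
`r ∈ {0,…,K-1}`; all other entries are zero. -/
noncomputable def feedbackMatrix (L K : ℕ) (β : ℝ) (μ : ℕ → ℕ → ℝ) :
    Matrix (Fin L) (Fin L) ℝ := fun i j =>
  if (j : ℕ) + 1 ≤ (i : ℕ) ∧ ((i : ℕ) - j - 1) / K < (L - 1 - (j : ℕ)) / K then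
    μ (j : ℕ) (((i : ℕ) - j - 1) / K) * (β ^ (2 * (((i : ℕ) - j - 1) % K)))⁻¹
  else 0

open Finset Matrix

theorem Finset.sum_range_mul_eq_sum_sum {M : Type*} [AddCommMonoid M] (f : ℕ → M) (m n : ℕ) :
    ∑ t ∈ range (m * n), f t = ∑ i ∈ range m, ∑ r ∈ range n, f (i * n + r) := by
  induction m with
  | zero => simp
  | succ m ih => rw [Nat.succ_mul, sum_range_add, ih, sum_range_succ]

theorem ZMod.sum_range_natCast_add {M : Type*} [AddCommMonoid M] (K : ℕ) [NeZero K] (b : ℕ)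
    (f : ZMod K → M) : ∑ r ∈ range K, f ((b + r : ℕ) : ZMod K) = ∑ s, f s :=
  sum_nbij' (fun r => ((b + r : ℕ) : ZMod K)) (fun s => (s - b).val) (by simp)
    (fun s _ => mem_range.mpr (ZMod.val_lt _))
    (fun r hr => by simp [ZMod.val_natCast_of_lt (mem_range.mp hr)])
    (fun s _ => by simp) (fun _ _ => rfl)

section feedbackColumn

variable (L K : ℕ) (β : ℝ) (μ : ℕ → ℕ → ℝ)

noncomputable def feedbackColumn (j n : ℕ) : ℝ :=
  if j + 1 ≤ n ∧ (n - j - 1) / K < (L - 1 - j) / K then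
    μ j ((n - j - 1) / K) * (β ^ (2 * ((n - j - 1) % K)))⁻¹
  else 0

theorem feedbackMatrix_apply (i j : Fin L) :
    feedbackMatrix L K β μ i j = feedbackColumn L K β μ j i := rfl

variable {L K β μ}

theorem feedbackColumn_of_lt {j n : ℕ} (hn : n < j + 1) : feedbackColumn L K β μ j n = 0 :=
  if_neg (by omega)

theorem feedbackColumn_of_le [NeZero K] {j n : ℕ} (hn : j + 1 + (L - 1 - j) / K * K ≤ n) :
    feedbackColumn L K β μ j n = 0 := by
  refine if_neg fun ⟨_, hlt⟩ => ?_
  have := (Nat.le_div_iff_mul_le (NeZero.pos K)).mpr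
    (show (L - 1 - j) / K * K ≤ n - j - 1 by omega)
  omega

theorem feedbackColumn_block [NeZero K] {j m r : ℕ} (hm : m < (L - 1 - j) / K) (hr : r < K) :
    feedbackColumn L K β μ j (j + 1 + m * K + r) = μ j m * (β ^ (2 * r))⁻¹ := by
  have hsub : j + 1 + m * K + r - j - 1 = r + m * K := by omega
  have hdiv : (r + m * K) / K = m := by
    rw [Nat.add_mul_div_right _ _ (NeZero.pos K), Nat.div_eq_of_lt hr, zero_add]
  simp only [feedbackColumn, hsub, hdiv, Nat.add_mul_mod_self_right, Nat.mod_eq_of_lt hr]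
  exact if_pos ⟨by omega, hm⟩

theorem sum_range_mul_feedbackColumn [NeZero K] (g : ℕ → ℝ) {j : ℕ} (hj : j < L) :
    ∑ n ∈ range L, g n * feedbackColumn L K β μ j n =
      ∑ m ∈ range ((L - 1 - j) / K), ∑ r ∈ range K,
        g (j + 1 + m * K + r) * (μ j m * (β ^ (2 * r))⁻¹) := by
  have hMK := Nat.div_mul_le_self (L - 1 - j) K
  obtain ⟨e, he⟩ := Nat.exists_eq_add_of_le (show j + 1 + (L - 1 - j) / K * K ≤ L by omega)
  calc ∑ n ∈ range L, g n * feedbackColumn L K β μ j n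
      = ∑ n ∈ range (j + 1 + (L - 1 - j) / K * K + e),
          g n * feedbackColumn L K β μ j n := by rw [← he]
    _ = ∑ t ∈ range ((L - 1 - j) / K * K),
          g (j + 1 + t) * feedbackColumn L K β μ j (j + 1 + t) := by
        rw [sum_range_add, sum_range_add,
          sum_eq_zero fun n hn => by rw [feedbackColumn_of_lt (mem_range.mp hn), mul_zero],
          sum_eq_zero (s := range e) fun n _ => by rw [feedbackColumn_of_le (by omega), mul_zero],
          zero_add, add_zero]
    _ = _ := by
        rw [sum_range_mul_eq_sum_sum]
        refine sum_congr rfl fun m hm => sum_congr rfl fun r hr => ?_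
        rw [← add_assoc, feedbackColumn_block (mem_range.mp hm) (mem_range.mp hr)]

theorem sum_geometric_mul_feedbackColumn [NeZero K] (hβ : β ≠ 0) {d : ZMod K → ℝ}
    (hd : ∑ s, d s = 0) {j : ℕ} (hj : j < L) :
    ∑ n ∈ range L, β ^ (2 * n) * d n * feedbackColumn L K β μ j n = 0 := by
  rw [sum_range_mul_feedbackColumn _ hj]
  refine sum_eq_zero fun m _ => ?_
  have hblock : ∀ r, β ^ (2 * (j + 1 + m * K + r)) * d ((j + 1 + m * K + r : ℕ) : ZMod K) *
      (μ j m * (β ^ (2 * r))⁻¹) =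
        μ j m * β ^ (2 * (j + 1 + m * K)) * d ((j + 1 + m * K + r : ℕ) : ZMod K) := by
    intro r
    rw [mul_add, pow_add]
    field_simp
  simp only [hblock, ← mul_sum, ZMod.sum_range_natCast_add, hd, mul_zero]

theorem vecMul_diagonal_mul_feedbackMatrix_eq_zero [NeZero K] (hβ : β ≠ 0) {d : ZMod K → ℝ}
    (hd : ∑ s, d s = 0) :
    vecMul (fun l : Fin L => β ^ (2 * (l : ℕ)))
      (diagonal (fun l : Fin L => d (l : ℕ)) * feedbackMatrix L K β μ) = 0 := by
  funext j
  rw [← vecMul_vecMul, vecMul_apply_eq_sum]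
  simp only [vecMul_diagonal, feedbackMatrix_apply, Pi.zero_apply]
  exact (Fin.sum_univ_eq_sum_range
    (fun n => β ^ (2 * n) * d n * feedbackColumn L K β μ j n) L).trans
    (sum_geometric_mul_feedbackColumn hβ hd j.isLt)

end feedbackColumn

theorem stmt_3_general (K L : ℕ) [NeZero K]
    (β : ℝ) (hβ : β ≠ 0)
    (c : Fin K → ZMod K → ℝ)
    (horth : ∀ k i : Fin K, k ≠ i → ∑ s : ZMod K, c k s * c i s = 0)
    (μ : ℕ → ℕ → ℝ)
    (q : Fin L → ℝ) (hq : ∀ l : Fin L, q l = β ^ (2 * (l : ℕ)))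
    (C : Fin K → Matrix (Fin L) (Fin L) ℝ)
    (hC : ∀ k, C k = Matrix.diagonal (fun l : Fin L => c k ((l : ℕ) : ZMod K))) :
    (∀ k i : Fin K, k ≠ i →
      Matrix.vecMul q (C k * C i * feedbackMatrix L K β μ) = 0) ∧
    (∀ k : Fin K, ∑ i ∈ Finset.univ.erase k,
      (∑ l, (Matrix.vecMul q (C k * C i * feedbackMatrix L K β μ) l) ^ 2) = 0) := by
  have hnull : ∀ k i : Fin K, k ≠ i →
      Matrix.vecMul q (C k * C i * feedbackMatrix L K β μ) = 0 := by
    intro k i hki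
    rw [hC, hC, diagonal_mul_diagonal, funext hq]
    exact vecMul_diagonal_mul_feedbackMatrix_eq_zero hβ (d := fun s => c k s * c i s)
      (horth k i hki)
  refine ⟨hnull, fun k => sum_eq_zero fun i hi => ?_⟩
  simp [hnull k i (ne_of_mem_erase hi).symm]

/-- interference nulling for the CDMA-like linear feedback scheme:
with pairwise orthogonal `±1` spreading sequences `c_k`, diagonal matrices
`C_k = diag(c_k(l mod K))`, geometric decoding vector `q_l = β^{2l}` and any
feedback matrix `F` of the prescribed form, the cross-user term `qᵀ C_k C_i F`
vanishes identically for `k ≠ i`, and hence so does `Σ_{i≠k} ‖qᵀ C_k C_i F‖²`. -/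
theorem stmt_3 (K L : ℕ) [NeZero K] (hK : 2 ≤ K) (hL : 1 ≤ L)
    (β : ℝ) (hβ : β ≠ 0)
    (c : Fin K → ZMod K → ℝ)
    (hc : ∀ k s, c k s = 1 ∨ c k s = -1)
    (horth : ∀ k i : Fin K, k ≠ i → ∑ s : ZMod K, c k s * c i s = 0)
    (μ : ℕ → ℕ → ℝ)
    (q : Fin L → ℝ) (hq : ∀ l : Fin L, q l = β ^ (2 * (l : ℕ)))
    (C : Fin K → Matrix (Fin L) (Fin L) ℝ)
    (hC : ∀ k, C k = Matrix.diagonal (fun l : Fin L => c k ((l : ℕ) : ZMod K))) :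
    (∀ k i : Fin K, k ≠ i →
      Matrix.vecMul q (C k * C i * feedbackMatrix L K β μ) = 0) ∧
    (∀ k : Fin K, ∑ i ∈ Finset.univ.erase k,
      (∑ l, (Matrix.vecMul q (C k * C i * feedbackMatrix L K β μ) l) ^ 2) = 0) :=
  stmt_3_general K L β hβ c horth μ q hq C hC
end

section
/- Let β ∈ (0,1) be a real number, K ≥ 1 and n > K integers, and define g(n,β) = Σ_{i=n−K+1}^{n} β^{2(i−1)} + Σ_{i=1}^{n−K} β^{2(i−1)+4K⌊(n−i)/K⌋}. Then β^{2n}·(β^{−2K} − 1)/(1 − β²) ≤ g(n,β) ≤ β^{2n}·(β^{−2K}(1+β²) − 1)/(1 − β²). Consequently, for any γ ∈ (0,1) and P > 0, the SNR value SNR(n) = (1/K)·(1−γ)·(n+K−1)·P / g(n,β) satisfies SNR(n) ≥ a_lb·(1−γ)·(n+K−1)·P/(K·β^{2n}), where a_lb = (1 − β²)/(β^{−2K}(1+β²) − 1). -/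
/-!
Write `x = β²`. The first sum in `g(n, β)` is the geometric sum `x^(n-K) + ⋯ + x^(n-1)`, which is
exactly the lower bound. In the second sum, writing `n - i = K q + r` with `0 ≤ r < K`, the exponent
of `x` in the `i`-th term is `n - 1 + K q - r`; since `q ≥ 1` these exponents are at least `n`, and
they are pairwise distinct because `(q, r)` is recovered from `K q - r`. Hence the second sum is at
most `x^n + x^(n+1) + ⋯ = x^n / (1 - x) ≤ x^(n-K+1) / (1 - x)`, which gives the upper bound, and
the SNR bound follows by replacing `g` by its upper bound.
-/

open Finset

theorem sum_Icc_pow_sub_one {x : ℝ} (hx : x ≠ 1) {a b : ℕ} (hab : a ≤ b) :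
    ∑ i ∈ Icc (a + 1) b, x ^ (i - 1) = (x ^ a - x ^ b) / (1 - x) := by
  rw [← Ico_add_one_right_eq_Icc, ← sum_Ico_add' (fun i => x ^ (i - 1)) a b 1]
  simpa using geom_sum_Ico' hx hab

theorem sum_pow_le_pow_div_one_sub_of_injOn {ι : Type*} {x : ℝ} (hx0 : 0 ≤ x) (hx1 : x < 1)
    {s : Finset ι} {e : ι → ℕ} {m : ℕ} (he : Set.InjOn e s) (hm : ∀ i ∈ s, m ≤ e i) :
    ∑ i ∈ s, x ^ e i ≤ x ^ m / (1 - x) := by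
  classical
  set N := m + s.sup e + 1
  have hsub : s.image e ⊆ Ico m N := by
    intro k hk
    obtain ⟨i, hi, rfl⟩ := mem_image.mp hk
    have := le_sup (f := e) hi
    exact mem_Ico.mpr ⟨hm i hi, by omega⟩
  calc ∑ i ∈ s, x ^ e i = ∑ k ∈ s.image e, x ^ k := (sum_image he).symm
    _ ≤ ∑ k ∈ Ico m N, x ^ k := sum_le_sum_of_subset_of_nonneg hsub fun _ _ _ => by positivity
    _ = (x ^ m - x ^ N) / (1 - x) := geom_sum_Ico' hx1.ne (by omega)
    _ ≤ x ^ m / (1 - x) :=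
      div_le_div_of_nonneg_right (sub_le_self _ (by positivity)) (by linarith)

/-- The exponent of `β²` in the `i`-th term of the second sum of `g(n, β)`. -/
def blockExponent (K n i : ℕ) : ℕ := (i - 1) + 2 * K * ((n - i) / K)

theorem blockExponent_add_mod {K n i : ℕ} (hi : i ∈ Icc 1 n) :
    blockExponent K n i + (n - i) % K = n - 1 + K * ((n - i) / K) := by
  have := Nat.div_add_mod (n - i) K
  rw [mem_Icc] at hi
  rw [blockExponent, mul_assoc]
  omega

theorem blockExponent_injOn (K n : ℕ) :
    Set.InjOn (blockExponent K n) (Icc 1 n) := by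
  intro i hi j hj hij
  have hi' := blockExponent_add_mod (K := K) hi
  have hj' := blockExponent_add_mod (K := K) hj
  have hcross : K * ((n - i) / K) + (n - j) % K = K * ((n - j) / K) + (n - i) % K := by omega
  have hmod : (n - j) % K = (n - i) % K := by
    simpa [Nat.mul_add_mod, Nat.mod_mod] using congrArg (· % K) hcross
  have := Nat.div_add_mod (n - i) K
  have := Nat.div_add_mod (n - j) K
  simp only [coe_Icc, Set.mem_Icc] at hi hj
  omega

theorem le_blockExponent {K n i : ℕ} (hK : 0 < K) (hi : i ∈ Icc 1 (n - K)) :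
    n ≤ blockExponent K n i := by
  rw [mem_Icc] at hi
  have hq : K ≤ K * ((n - i) / K) :=
    Nat.le_mul_of_pos_right K ((Nat.one_le_div_iff hK).mpr (by omega))
  have := Nat.mod_lt (n - i) hK
  have := blockExponent_add_mod (K := K) (n := n) (mem_Icc.mpr ⟨hi.1, by omega⟩)
  omega

theorem sum_pow_blockExponent_le {x : ℝ} (hx0 : 0 ≤ x) (hx1 : x < 1) {K : ℕ} (hK : 0 < K)
    (n : ℕ) : ∑ i ∈ Icc 1 (n - K), x ^ blockExponent K n i ≤ x ^ n / (1 - x) :=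
  sum_pow_le_pow_div_one_sub_of_injOn hx0 hx1
    ((blockExponent_injOn K n).mono (coe_subset.mpr (Icc_subset_Icc_right (Nat.sub_le n K))))
    fun _ hi => le_blockExponent hK hi

/-- `g(n, β)` of the paper as a function of `x = β²`. -/
def snrDenominator (x : ℝ) (K n : ℕ) : ℝ :=
  ∑ i ∈ Icc (n - K + 1) n, x ^ (i - 1) + ∑ i ∈ Icc 1 (n - K), x ^ blockExponent K n i

theorem two_mul_blockExponent (K n i : ℕ) :
    2 * blockExponent K n i = 2 * (i - 1) + 4 * K * ((n - i) / K) := by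
  rw [blockExponent]; ring

section SNRBounds

variable {x : ℝ} {K n : ℕ}

theorem snrDenominator_pos (hx0 : 0 < x) (hK : 1 ≤ K) (hKn : K ≤ n) : 0 < snrDenominator x K n :=
  add_pos_of_pos_of_nonneg (sum_pos (fun _ _ => by positivity) (nonempty_Icc.mpr (by omega)))
    (sum_nonneg fun _ _ => by positivity)

theorem snrDenominator_ge (hx0 : 0 < x) (hx1 : x < 1) (hKn : K ≤ n) :
    x ^ n * ((x ^ K)⁻¹ - 1) / (1 - x) ≤ snrDenominator x K n := by
  rw [snrDenominator, sum_Icc_pow_sub_one hx1.ne (Nat.sub_le n K), pow_sub₀ x hx0.ne' hKn,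
    mul_sub, mul_one]
  exact le_add_of_nonneg_right (sum_nonneg fun _ _ => by positivity)

theorem snrDenominator_le (hx0 : 0 < x) (hx1 : x < 1) (hK : 1 ≤ K) (hKn : K ≤ n) :
    snrDenominator x K n ≤ x ^ n * ((x ^ K)⁻¹ * (1 + x) - 1) / (1 - x) := by
  have h1x : 0 < 1 - x := by linarith
  calc snrDenominator x K n ≤ (x ^ (n - K) - x ^ n) / (1 - x) + x ^ n / (1 - x) := by
        rw [snrDenominator, sum_Icc_pow_sub_one hx1.ne (Nat.sub_le n K)]
        gcongr
        exact sum_pow_blockExponent_le hx0.le hx1 hK n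
    _ ≤ (x ^ (n - K) - x ^ n) / (1 - x) + x ^ (n - K + 1) / (1 - x) :=
        add_le_add le_rfl (div_le_div_of_nonneg_right
          (pow_le_pow_of_le_one hx0.le hx1.le (by omega)) h1x.le)
    _ = x ^ n * ((x ^ K)⁻¹ * (1 + x) - 1) / (1 - x) := by
        rw [pow_succ, pow_sub₀ x hx0.ne' hKn]; ring

theorem le_div_snrDenominator (hx0 : 0 < x) (hx1 : x < 1) (hK : 1 ≤ K) (hKn : K ≤ n)
    {γ P : ℝ} (hγ : γ < 1) (hP : 0 ≤ P) :
    (1 - x) / ((x ^ K)⁻¹ * (1 + x) - 1) * (1 - γ) * ((n : ℝ) + K - 1) * P / (K * x ^ n)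
      ≤ 1 / K * (1 - γ) * ((n : ℝ) + K - 1) * P / snrDenominator x K n := by
  have hK1 : (1 : ℝ) ≤ K := by exact_mod_cast hK
  have h1x : 1 - x ≠ 0 := by linarith
  have hD : (x ^ K)⁻¹ * (1 + x) - 1 ≠ 0 := by
    refine (sub_pos.mpr (one_lt_mul_of_le_of_lt ?_ (by linarith))).ne'
    exact (one_le_inv₀ (pow_pos hx0 K)).mpr (pow_le_one₀ hx0.le hx1.le)
  have hnum : 0 ≤ 1 / (K : ℝ) * (1 - γ) * ((n : ℝ) + K - 1) * P := by
    have hnK : (0 : ℝ) ≤ n + K - 1 := by linarith [(Nat.cast_nonneg n : (0 : ℝ) ≤ n)]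
    exact mul_nonneg (mul_nonneg (mul_nonneg (by positivity) (by linarith)) hnK) hP
  calc _ = 1 / (K : ℝ) * (1 - γ) * ((n : ℝ) + K - 1) * P
        / (x ^ n * ((x ^ K)⁻¹ * (1 + x) - 1) / (1 - x)) := by
        field_simp
    _ ≤ _ := div_le_div_of_nonneg_left hnum (snrDenominator_pos hx0 hK hKn)
        (snrDenominator_le hx0 hx1 hK hKn)

end SNRBounds

/-- bounds on the SNR denominator
`g(n,β) = Σ_{i=n−K+1}^{n} β^{2(i−1)} + Σ_{i=1}^{n−K} β^{2(i−1)+4K⌊(n−i)/K⌋}`: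
`β^{2n}(β^{−2K}−1)/(1−β²) ≤ g(n,β) ≤ β^{2n}(β^{−2K}(1+β²)−1)/(1−β²)`, and
consequently the lower bound `SNR(n) ≥ a_lb·(1−γ)(n+K−1)P/(K·β^{2n})` with
`a_lb = (1−β²)/(β^{−2K}(1+β²)−1)`. -/
theorem stmt_6 (β : ℝ) (hβ : β ∈ Set.Ioo (0:ℝ) 1) (K n : ℕ)
    (hK : 1 ≤ K) (hn : K < n)
    (g : ℝ)
    (hg : g = (∑ i ∈ Finset.Icc (n - K + 1) n, β ^ (2 * (i - 1)))
      + ∑ i ∈ Finset.Icc 1 (n - K), β ^ (2 * (i - 1) + 4 * K * ((n - i) / K))) :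
    β ^ (2 * n) * ((β ^ (2 * K))⁻¹ - 1) / (1 - β ^ 2) ≤ g ∧
    g ≤ β ^ (2 * n) * ((β ^ (2 * K))⁻¹ * (1 + β ^ 2) - 1) / (1 - β ^ 2) ∧
    ∀ γ P : ℝ, γ ∈ Set.Ioo (0:ℝ) 1 → 0 < P →
      ((1 - β ^ 2) / ((β ^ (2 * K))⁻¹ * (1 + β ^ 2) - 1))
          * (1 - γ) * ((n : ℝ) + K - 1) * P / (K * β ^ (2 * n))
        ≤ (1 / K) * (1 - γ) * ((n : ℝ) + K - 1) * P / g := by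
  obtain ⟨hβ0, hβ1⟩ := hβ
  have hx0 : 0 < β ^ 2 := by positivity
  have hx1 : β ^ 2 < 1 := pow_lt_one₀ hβ0.le hβ1 two_ne_zero
  have hg_eq : g = snrDenominator (β ^ 2) K n := by
    simp only [hg, snrDenominator, ← pow_mul, two_mul_blockExponent]
  rw [hg_eq, pow_mul β 2 n, pow_mul β 2 K]
  exact ⟨snrDenominator_ge hx0 hx1 hn.le, snrDenominator_le hx0 hx1 hK hn.le,
    fun γ P hγ hP => le_div_snrDenominator hx0 hx1 hK hn.le hγ.2 hP.le⟩
end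

section
/- Let β ∈ (0,1) be a real number, K ≥ 1 an integer, and γ, P, σn2 real numbers with γ ≥ 0, P ≥ 0, σn2 ≥ 0. Define for integers n > K: e(n,β) = [(1−β^{2K})²/(K²(1−β²)β^{2K})]·(n − K − Σ_{i=1}^{n−K} β^{2K⌊(n−i)/K⌋}). If (1−β^{2K})²/(K(1−β²)β^{2K}) ≤ γP/(1+σn2), then for every integer n > K, e(n,β) ≤ γ·(n+K−1)·P/(K(1+σn2)). -/
/-!
With `C = (1-β^{2K})²/(K(1-β²)β^{2K}) ≥ 0` and `D = γP/(1+σn2)`, both sides are quotients by `K`: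
`e(n,β) = C·x/K` and the bound is `D·(n+K-1)/K`. The sum in `x` is nonnegative, so
`x ≤ n - K ≤ n+K-1`, and `C·x ≤ C·(n+K-1) ≤ D·(n+K-1)`.
-/

noncomputable def feedbackPowerCoeff (β : ℝ) (K : ℕ) : ℝ :=
  (1 - β ^ (2 * K)) ^ 2 / ((K : ℝ) * (1 - β ^ 2) * β ^ (2 * K))

lemma feedbackPowerCoeff_nonneg {β : ℝ} (hβ : β ^ 2 ≤ 1) (K : ℕ) :
    0 ≤ feedbackPowerCoeff β K :=
  div_nonneg (sq_nonneg _) <|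
    mul_nonneg (mul_nonneg K.cast_nonneg (sub_nonneg.mpr hβ)) (Even.pow_nonneg ⟨K, by ring⟩ β)

lemma feedbackPowerCoeff_div_natCast (β : ℝ) (K : ℕ) :
    feedbackPowerCoeff β K / K
      = (1 - β ^ (2 * K)) ^ 2 / ((K : ℝ) ^ 2 * (1 - β ^ 2) * β ^ (2 * K)) := by
  rw [feedbackPowerCoeff, div_div]
  ring

lemma mul_le_mul_of_le_of_le_of_nonneg {α : Type*} [Mul α] [Zero α] [Preorder α] [PosMulMono α]
    [MulPosMono α] {C D x y : α} (hC : 0 ≤ C) (hCD : C ≤ D) (hxy : x ≤ y) (hy : 0 ≤ y) :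
    C * x ≤ D * y :=
  calc C * x ≤ C * y := mul_le_mul_of_nonneg_left hxy hC
    _ ≤ D * y := mul_le_mul_of_nonneg_right hCD hy

theorem stmt_9_general (β : ℝ) (hβ : β ∈ Set.Ioo (0:ℝ) 1) (K : ℕ) (hK : 1 ≤ K)
    (γ P σn2 : ℝ)
    (e : ℕ → ℝ)
    (he : ∀ n, K < n → e n =
      ((1 - β ^ (2 * K)) ^ 2 / ((K : ℝ) ^ 2 * (1 - β ^ 2) * β ^ (2 * K)))
        * ((n : ℝ) - K - ∑ i ∈ Finset.Icc 1 (n - K), β ^ (2 * K * ((n - i) / K))))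
    (hcond : (1 - β ^ (2 * K)) ^ 2 / ((K : ℝ) * (1 - β ^ 2) * β ^ (2 * K))
        ≤ γ * P / (1 + σn2)) :
    ∀ n : ℕ, K < n → e n ≤ γ * ((n : ℝ) + K - 1) * P / (K * (1 + σn2)) := by
  intro n hn
  obtain ⟨hβ0, hβ1⟩ := hβ
  have hKr : (1 : ℝ) ≤ K := by exact_mod_cast hK
  have hnK : (K : ℝ) < n := by exact_mod_cast hn
  have hsum : 0 ≤ ∑ i ∈ Finset.Icc 1 (n - K), β ^ (2 * K * ((n - i) / K)) :=
    Finset.sum_nonneg fun _ _ => pow_nonneg hβ0.le _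
  have hC := feedbackPowerCoeff_nonneg (β := β) (by nlinarith) K
  have key := mul_le_mul_of_le_of_le_of_nonneg hC hcond
    (x := (n : ℝ) - K - ∑ i ∈ Finset.Icc 1 (n - K), β ^ (2 * K * ((n - i) / K)))
    (y := (n : ℝ) + K - 1) (by linarith) (by linarith)
  calc e n = feedbackPowerCoeff β K
          * ((n : ℝ) - K - ∑ i ∈ Finset.Icc 1 (n - K), β ^ (2 * K * ((n - i) / K))) / K := by
        rw [he n hn, ← feedbackPowerCoeff_div_natCast, div_mul_eq_mul_div]
    _ ≤ γ * P / (1 + σn2) * ((n : ℝ) + K - 1) / K :=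
        div_le_div_of_nonneg_right key K.cast_nonneg
    _ = γ * ((n : ℝ) + K - 1) * P / (K * (1 + σn2)) := by
        rw [mul_comm (K : ℝ), ← div_div]
        ring

/-- a blocklength-independent sufficient condition on `β` for the
feedback power constraint: if `(1−β^{2K})²/(K(1−β²)β^{2K}) ≤ γP/(1+σn2)`, then
for every `n > K` the feedback power
`e(n,β) = [(1−β^{2K})²/(K²(1−β²)β^{2K})]·(n − K − Σ_{i=1}^{n−K} β^{2K⌊(n−i)/K⌋})`
satisfies `e(n,β) ≤ γ(n+K−1)P/(K(1+σn2))`. -/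
theorem stmt_9 (β : ℝ) (hβ : β ∈ Set.Ioo (0:ℝ) 1) (K : ℕ) (hK : 1 ≤ K)
    (γ P σn2 : ℝ) (hγ : 0 ≤ γ) (hP : 0 ≤ P) (hσ : 0 ≤ σn2)
    (e : ℕ → ℝ)
    (he : ∀ n, K < n → e n =
      ((1 - β ^ (2 * K)) ^ 2 / ((K : ℝ) ^ 2 * (1 - β ^ 2) * β ^ (2 * K)))
        * ((n : ℝ) - K - ∑ i ∈ Finset.Icc 1 (n - K), β ^ (2 * K * ((n - i) / K))))
    (hcond : (1 - β ^ (2 * K)) ^ 2 / ((K : ℝ) * (1 - β ^ 2) * β ^ (2 * K))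
        ≤ γ * P / (1 + σn2)) :
    ∀ n : ℕ, K < n → e n ≤ γ * ((n : ℝ) + K - 1) * P / (K * (1 + σn2)) :=
  stmt_9_general β hβ K hK γ P σn2 e he hcond
end

section
/- Let K ≥ 2 be an integer and define f(β) = (1 − β^{2K})² / (K·(1 − β²)·β^{2K}) for β ∈ (0,1). Then f is strictly decreasing and positive on (0,1): if β₁, β₂ ∈ (0,1) with β₁ < β₂, then 0 < f(β₂) < f(β₁). -/
/-!
Substituting `x = β²`, the quotient `(1 - x^K)² / ((1 - x) x^K)` expands, via the geometric
sums for `x` and `x⁻¹`, into `∑_{i<K} (x^{-(i+1)} - x^i)`. On `(0, 1)` every summand is positive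
and strictly decreasing in `x`, and `β ↦ β²` is strictly increasing there.
-/

open Finset

variable {𝕜 : Type*} [Field 𝕜]

theorem sq_one_sub_pow_div_eq_sum (K : ℕ) {x : 𝕜} (hx0 : x ≠ 0) (hx1 : x ≠ 1) :
    (1 - x ^ K) ^ 2 / ((1 - x) * x ^ K) = ∑ i ∈ range K, (x⁻¹ ^ (i + 1) - x ^ i) := by
  have hinv1 : x⁻¹ ≠ 1 := by simpa using hx1
  simp only [sum_sub_distrib, pow_succ, ← sum_mul]
  rw [geom_sum_eq hinv1, geom_sum_eq hx1, inv_pow]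
  have : x - 1 ≠ 0 := sub_ne_zero.mpr hx1
  have : 1 - x ≠ 0 := sub_ne_zero.mpr hx1.symm
  field_simp
  ring

variable [LinearOrder 𝕜] [IsStrictOrderedRing 𝕜]

theorem inv_pow_succ_sub_pow_pos {x : 𝕜} (hx0 : 0 < x) (hx1 : x < 1) (i : ℕ) :
    0 < x⁻¹ ^ (i + 1) - x ^ i :=
  sub_pos.mpr <| calc
    x ^ i ≤ 1 := pow_le_one₀ hx0.le hx1.le
    _ < x⁻¹ ^ (i + 1) := one_lt_pow₀ ((one_lt_inv₀ hx0).mpr hx1) (Nat.add_one_ne_zero i)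

theorem strictAntiOn_inv_pow_succ_sub_pow (i : ℕ) :
    StrictAntiOn (fun x : 𝕜 => x⁻¹ ^ (i + 1) - x ^ i) (Set.Ioi 0) := by
  intro x hx y hy hxy
  have hinv : y⁻¹ ^ (i + 1) < x⁻¹ ^ (i + 1) :=
    pow_lt_pow_left₀ ((inv_lt_inv₀ hy hx).mpr hxy) (inv_pos.mpr hy).le (Nat.add_one_ne_zero i)
  have hpow : x ^ i ≤ y ^ i := pow_le_pow_left₀ (le_of_lt hx) hxy.le i
  linarith

theorem strictAntiOn_sum_inv_pow_succ_sub_pow {K : ℕ} (hK : K ≠ 0) :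
    StrictAntiOn (fun x : 𝕜 => ∑ i ∈ range K, (x⁻¹ ^ (i + 1) - x ^ i)) (Set.Ioi 0) :=
  fun _ hx _ hy hxy => sum_lt_sum_of_nonempty (nonempty_range_iff.mpr hK)
    fun i _ => strictAntiOn_inv_pow_succ_sub_pow i hx hy hxy

/-- the feedback-power function
`f(β) = (1−β^{2K})²/(K(1−β²)β^{2K})` is strictly decreasing and positive on
`(0,1)`: if `β₁ < β₂` in `(0,1)` then `0 < f(β₂) < f(β₁)`. -/
theorem stmt_10 (K : ℕ) (hK : 2 ≤ K) (f : ℝ → ℝ)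
    (hf : ∀ β ∈ Set.Ioo (0:ℝ) 1,
      f β = (1 - β ^ (2 * K)) ^ 2 / ((K : ℝ) * (1 - β ^ 2) * β ^ (2 * K))) :
    ∀ β₁ ∈ Set.Ioo (0:ℝ) 1, ∀ β₂ ∈ Set.Ioo (0:ℝ) 1, β₁ < β₂ →
      0 < f β₂ ∧ f β₂ < f β₁ := by
  have hK0 : K ≠ 0 := by omega
  have hKpos : (0 : ℝ) < K := by positivity
  have hsq : ∀ β ∈ Set.Ioo (0:ℝ) 1, β ^ 2 ∈ Set.Ioo (0:ℝ) 1 := fun β ⟨h0, h1⟩ =>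
    ⟨by positivity, pow_lt_one₀ h0.le h1 two_ne_zero⟩
  have hf_sum : ∀ β ∈ Set.Ioo (0:ℝ) 1,
      f β = (∑ i ∈ range K, ((β ^ 2)⁻¹ ^ (i + 1) - (β ^ 2) ^ i)) / K := by
    intro β hβ
    obtain ⟨hx0, hx1⟩ := hsq β hβ
    rw [hf β hβ, pow_mul, mul_assoc, div_mul_eq_div_div_swap,
      sq_one_sub_pow_div_eq_sum K hx0.ne' hx1.ne]
  intro β₁ hβ₁ β₂ hβ₂ hlt
  obtain ⟨hx₂0, hx₂1⟩ := hsq β₂ hβ₂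
  rw [hf_sum β₁ hβ₁, hf_sum β₂ hβ₂]
  refine ⟨div_pos (sum_pos (fun i _ => inv_pow_succ_sub_pow_pos hx₂0 hx₂1 i)
    (nonempty_range_iff.mpr hK0)) hKpos, div_lt_div_of_pos_right ?_ hKpos⟩
  exact strictAntiOn_sum_inv_pow_succ_sub_pow hK0 (hsq β₁ hβ₁).1 hx₂0
    (pow_lt_pow_left₀ hlt hβ₁.1.le two_ne_zero)
end

section
/- Let K ≥ 2 be an integer and define f(β) = (1 − β^{2K})² / (K·(1 − β²)·β^{2K}) for β ∈ (0,1). Then f is a bijection from the open interval (0,1) onto the open interval (0,∞); in particular, lim_{β→0⁺} f(β) = ∞ and lim_{β→1⁻} f(β) = 0. -/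
/-!
Put `x = β²`. The geometric sum `(1 - x^K) / (1 - x) = ∑_{i<K} x^i` turns `K f(β)` into
`∑_{i<K} (x^{-(K-i)} - x^i)`, a sum of strictly decreasing functions of `x > 0` that vanishes at
`x = 1` and dominates `x^{-K} - 1` on `(0, 1]`. So `f` is continuous and strictly decreasing on
`(0, 1)`, tends to `∞` at `0⁺` and to `0` at `1⁻`, and the intermediate value theorem gives
surjectivity onto `(0, ∞)`.
-/

open Filter Set Topology

theorem ContinuousOn.surjOn_Ioi_of_tendsto {α δ : Type*} [ConditionallyCompleteLinearOrder α]
    [TopologicalSpace α] [OrderTopology α] [DenselyOrdered α] [LinearOrder δ]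
    [TopologicalSpace δ] [OrderClosedTopology δ] {f : α → δ} {s : Set α} [OrdConnected s]
    {l₁ l₂ : Filter α} [l₁.NeBot] [l₂.NeBot] {c : δ} (hf : ContinuousOn f s) (hs₁ : s ∈ l₁)
    (hs₂ : s ∈ l₂) (h₁ : Tendsto f l₁ atTop) (h₂ : Tendsto f l₂ (𝓝 c)) :
    SurjOn f s (Ioi c) := by
  intro y hy
  obtain ⟨a, hya, ha⟩ := ((h₁.eventually_ge_atTop y).and hs₁).exists
  obtain ⟨b, hby, hb⟩ := ((h₂.eventually_lt_const hy).and hs₂).exists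
  exact hf.surjOn_uIcc ha hb (mem_uIcc.2 (Or.inr ⟨hby.le, hya⟩))

theorem tendsto_pow_nhdsGT_zero {n : ℕ} (hn : n ≠ 0) :
    Tendsto (fun x : ℝ => x ^ n) (𝓝[>] 0) (𝓝[>] 0) :=
  tendsto_nhdsWithin_iff.2
    ⟨((continuous_pow n).tendsto' 0 0 (zero_pow hn)).mono_left nhdsWithin_le_nhds,
      eventually_mem_nhdsWithin.mono fun _ hx => mem_Ioi.2 (pow_pos hx n)⟩

noncomputable def feedbackSum (K : ℕ) (x : ℝ) : ℝ :=
  ∑ i ∈ Finset.range K, ((x ^ (K - i))⁻¹ - x ^ i)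

theorem one_sub_pow_sq_div_eq_feedbackSum {x : ℝ} (hx₀ : x ≠ 0) (hx₁ : x ≠ 1) (K : ℕ) :
    (1 - x ^ K) ^ 2 / ((1 - x) * x ^ K) = feedbackSum K x := by
  have hgeom : (1 - x ^ K) / (1 - x) = ∑ i ∈ Finset.range K, x ^ i := by
    rw [geom_sum_eq hx₁, ← neg_div_neg_eq, neg_sub, neg_sub]
  calc (1 - x ^ K) ^ 2 / ((1 - x) * x ^ K)
      = (1 - x ^ K) / (1 - x) * ((x ^ K)⁻¹ - 1) := by
        field_simp [sub_ne_zero.2 hx₁.symm]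
    _ = feedbackSum K x := by
        rw [hgeom, Finset.sum_mul]
        refine Finset.sum_congr rfl fun i hi => ?_
        rw [← pow_sub_mul_pow x (Finset.mem_range.1 hi).le]
        field_simp

theorem strictAntiOn_feedbackSum {K : ℕ} (hK : K ≠ 0) :
    StrictAntiOn (feedbackSum K) (Ioi 0) := by
  intro a ha b hb hab
  refine Finset.sum_lt_sum_of_nonempty (Finset.nonempty_range_iff.2 hK) fun i hi => ?_
  have hiK : 0 < K - i := Nat.sub_pos_of_lt (Finset.mem_range.1 hi)
  have hinv : (b ^ (K - i))⁻¹ < (a ^ (K - i))⁻¹ :=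
    inv_strictAnti₀ (pow_pos ha _) (pow_lt_pow_left₀ hab (le_of_lt ha) hiK.ne')
  have hpow : a ^ i ≤ b ^ i := pow_le_pow_left₀ (le_of_lt ha) hab.le i
  linarith

theorem continuousOn_feedbackSum (K : ℕ) : ContinuousOn (feedbackSum K) (Ioi 0) := by
  unfold feedbackSum
  fun_prop (disch := intro x hx; exact pow_ne_zero _ (ne_of_gt hx))

@[simp]
theorem feedbackSum_one (K : ℕ) : feedbackSum K 1 = 0 := by simp [feedbackSum]

theorem tendsto_feedbackSum_one (K : ℕ) : Tendsto (feedbackSum K) (𝓝 1) (𝓝 0) := by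
  simpa using ((continuousOn_feedbackSum K).continuousAt (Ioi_mem_nhds one_pos)).tendsto

theorem tendsto_feedbackSum_nhdsGT_zero {K : ℕ} (hK : K ≠ 0) :
    Tendsto (feedbackSum K) (𝓝[>] 0) atTop := by
  have hinv : Tendsto (fun x : ℝ => (x ^ K)⁻¹ - 1) (𝓝[>] 0) atTop := by
    simp_rw [← inv_pow]
    exact tendsto_atTop_add_const_right _ _
      ((tendsto_pow_atTop hK).comp tendsto_inv_nhdsGT_zero)
  refine tendsto_atTop_mono' _ ?_ hinv
  filter_upwards [Ioo_mem_nhdsGT zero_lt_one] with x ⟨hx₀, hx₁⟩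
  refine Finset.single_le_sum (f := fun i => (x ^ (K - i))⁻¹ - x ^ i) (fun i _ => ?_)
    (Finset.mem_range.2 (Nat.pos_of_ne_zero hK))
  have hpow : x ^ i ≤ 1 := pow_le_one₀ hx₀.le hx₁.le
  have hinv : 1 ≤ (x ^ (K - i))⁻¹ := (one_le_inv₀ (pow_pos hx₀ _)).2 (pow_le_one₀ hx₀.le hx₁.le)
  linarith

/-- the feedback-power function
`f(β) = (1−β^{2K})²/(K(1−β²)β^{2K})` is a bijection from `(0,1)` onto `(0,∞)`;
in particular `f(β) → ∞` as `β → 0⁺` and `f(β) → 0` as `β → 1⁻`. -/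
theorem stmt_11 (K : ℕ) (hK : 2 ≤ K) (f : ℝ → ℝ)
    (hf : ∀ β, f β = (1 - β ^ (2 * K)) ^ 2 / ((K : ℝ) * (1 - β ^ 2) * β ^ (2 * K))) :
    Set.BijOn f (Set.Ioo 0 1) (Set.Ioi (0:ℝ)) ∧
    Filter.Tendsto f (nhdsWithin 0 (Set.Ioi 0)) Filter.atTop ∧
    Filter.Tendsto f (nhdsWithin 1 (Set.Iio 1)) (nhds 0) := by
  have hK₀ : K ≠ 0 := by omega
  have hK_pos : (0 : ℝ) < K := by positivity
  set g : ℝ → ℝ := fun β => feedbackSum K (β ^ 2) / K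
  have hfg : EqOn f g (Ioo 0 1) := fun β ⟨hβ₀, hβ₁⟩ => by
    rw [hf, pow_mul, mul_assoc, div_mul_eq_div_div_swap,
      one_sub_pow_sq_div_eq_feedbackSum (by positivity) (by nlinarith)]
  have hsq : MapsTo (· ^ 2) (Ioo (0 : ℝ) 1) (Ioo 0 1) := fun β ⟨hβ₀, hβ₁⟩ =>
    ⟨by positivity, by nlinarith⟩
  have hanti : StrictAntiOn g (Ioo 0 1) := fun a ha b hb hab =>
    div_lt_div_of_pos_right (strictAntiOn_feedbackSum hK₀ (hsq ha).1 (hsq hb).1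
      (pow_lt_pow_left₀ hab ha.1.le two_ne_zero)) hK_pos
  have hpos : MapsTo g (Ioo 0 1) (Ioi 0) := fun β hβ => div_pos (by
    simpa using strictAntiOn_feedbackSum hK₀ (hsq hβ).1 (mem_Ioi.2 one_pos) (hsq hβ).2) hK_pos
  have hcont : ContinuousOn g (Ioo 0 1) :=
    ((continuousOn_feedbackSum K).comp (continuous_pow 2).continuousOn
      fun β hβ => (hsq hβ).1).div_const _
  have hg₀ : Tendsto g (𝓝[>] 0) atTop :=
    ((tendsto_feedbackSum_nhdsGT_zero hK₀).comp
      (tendsto_pow_nhdsGT_zero two_ne_zero)).atTop_div_const hK_pos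
  have hg₁ : Tendsto g (𝓝[<] 1) (𝓝 0) := by
    simpa using ((tendsto_feedbackSum_one K).comp (((continuous_pow 2).tendsto' 1 1
      (one_pow 2)).mono_left nhdsWithin_le_nhds)).div_const (K : ℝ)
  have hI₀ : Ioo (0 : ℝ) 1 ∈ 𝓝[>] 0 := Ioo_mem_nhdsGT zero_lt_one
  have hI₁ : Ioo (0 : ℝ) 1 ∈ 𝓝[<] 1 := Ioo_mem_nhdsLT zero_lt_one
  exact ⟨hfg.bijOn_iff.2 ⟨hpos, hanti.injOn, hcont.surjOn_Ioi_of_tendsto hI₀ hI₁ hg₀ hg₁⟩,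
    hg₀.congr' (mem_of_superset hI₀ hfg.symm), hg₁.congr' (mem_of_superset hI₁ hfg.symm)⟩
end

section
/- Let K ≥ 2 be an integer and define the polynomial p(x) = (1−K)·x^{K+1} + K·x^K − (K+1)·x + K. Then p is strictly decreasing on the interval (0,1], p(1) = 0, and consequently p(x) > 0 for every x ∈ (0,1). -/
/-!
Write `K = n + 1`. The derivative of `p` is
`(n + 2) * (x ^ n * (n + 1 - n * x) - 1) - (n + 1) * x ^ n`, and by the weighted AM–GM
inequality for `n` copies of `x` and one copy of `n + 1 - n * x` (whose mean is `1`) the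
bracket is nonpositive for `x ≥ 0`. Hence `p' < 0` on `(0, ∞)`, so `p` is strictly decreasing
on `[0, ∞)`, and `p 1 = 0` gives positivity to the left of `1`.
-/

open Set

/-- The polynomial whose positivity on `(0, 1)` gives the monotonicity of the feedback power. -/
noncomputable def feedbackPoly (K : ℕ) (x : ℝ) : ℝ :=
  (1 - (K : ℝ)) * x ^ (K + 1) + (K : ℝ) * x ^ K - ((K : ℝ) + 1) * x + K

/-- The induction step holds because the difference of consecutive terms is
`-(n + 1) * x ^ n * (1 - x) ^ 2`. -/
lemma pow_mul_add_one_sub_mul_le_one (n : ℕ) {x : ℝ} (hx : 0 ≤ x) :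
    x ^ n * ((n : ℝ) + 1 - n * x) ≤ 1 := by
  induction n with
  | zero => simp
  | succ n ih =>
    have hsq : 0 ≤ ((n : ℝ) + 1) * x ^ n * (1 - x) ^ 2 := by positivity
    push_cast
    rw [pow_succ]
    nlinarith

lemma hasDerivAt_feedbackPoly (n : ℕ) (x : ℝ) :
    HasDerivAt (feedbackPoly (n + 1))
      (((n : ℝ) + 2) * (x ^ n * ((n : ℝ) + 1 - n * x) - 1) - ((n : ℝ) + 1) * x ^ n) x := by
  have h := ((((hasDerivAt_pow (n + 2) x).const_mul (1 - ((n + 1 : ℕ) : ℝ))).add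
    ((hasDerivAt_pow (n + 1) x).const_mul ((n + 1 : ℕ) : ℝ))).sub
    ((hasDerivAt_id x).const_mul (((n + 1 : ℕ) : ℝ) + 1))).add_const ((n + 1 : ℕ) : ℝ)
  refine h.congr_deriv ?_
  push_cast
  ring

lemma feedbackPoly_deriv_neg (n : ℕ) {x : ℝ} (hx : 0 < x) :
    deriv (feedbackPoly (n + 1)) x < 0 := by
  rw [(hasDerivAt_feedbackPoly n x).deriv]
  have hmean := pow_mul_add_one_sub_mul_le_one n hx.le
  have hpow : 0 < ((n : ℝ) + 1) * x ^ n := by positivity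
  nlinarith

lemma strictAntiOn_feedbackPoly {K : ℕ} (hK : 1 ≤ K) :
    StrictAntiOn (feedbackPoly K) (Ici 0) := by
  obtain ⟨n, rfl⟩ := Nat.exists_eq_add_of_le' hK
  refine strictAntiOn_of_deriv_neg (convex_Ici 0) ?_ ?_
  · exact fun x _ => (hasDerivAt_feedbackPoly n x).continuousAt.continuousWithinAt
  · rw [interior_Ici]
    exact fun x hx => feedbackPoly_deriv_neg n hx

lemma feedbackPoly_one (K : ℕ) : feedbackPoly K 1 = 0 := by
  simp only [feedbackPoly, one_pow]
  ring

/-- the polynomial `p(x) = (1−K)x^{K+1} + Kx^K − (K+1)x + K` is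
strictly decreasing on `(0,1]`, vanishes at `x = 1`, and is therefore strictly
positive on `(0,1)`. -/
theorem stmt_12 (K : ℕ) (hK : 2 ≤ K) (p : ℝ → ℝ)
    (hp : ∀ x : ℝ, p x = (1 - (K : ℝ)) * x ^ (K + 1) + (K : ℝ) * x ^ K
        - ((K : ℝ) + 1) * x + K) :
    StrictAntiOn p (Set.Ioc 0 1) ∧ p 1 = 0 ∧
      ∀ x ∈ Set.Ioo (0:ℝ) 1, 0 < p x := by
  obtain rfl : p = feedbackPoly K := funext hp
  have hanti := strictAntiOn_feedbackPoly (K := K) (by omega)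
  refine ⟨hanti.mono fun x hx => le_of_lt hx.1, feedbackPoly_one K, fun x hx => ?_⟩
  simpa [feedbackPoly_one] using
    hanti (mem_Ici.2 hx.1.le) (mem_Ici.2 zero_le_one) hx.2
end

section
/- Let K ≥ 2 be an integer. Then for every real x ∈ (0,1], (1−K)·(K+1)·x^K + K²·x^{K−1} < K+1. -/
/-!
Writing `K = n + 1`, the weighted AM–GM inequality `(n + 1) x ^ n ≤ 1 + n x ^ (n + 1)`
(the mean of `1` and `n` copies of `x ^ (n + 1)` dominates their geometric mean `x ^ n`),
multiplied by `K`, bounds the left-hand side by `K - (K - 1) x ^ K ≤ K < K + 1`.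
-/

theorem succ_mul_pow_le_one_add_mul_pow_succ {t : ℝ} (ht : 0 ≤ t) (n : ℕ) :
    (n + 1) * t ^ n ≤ 1 + n * t ^ (n + 1) := by
  induction n with
  | zero => simp
  | succ n ih =>
    have hsign : 0 ≤ (1 - t) * (1 - t ^ (n + 1)) := by
      rcases le_total t 1 with h | h
      · exact mul_nonneg (by linarith) (by linarith [pow_le_one₀ ht h (n := n + 1)])
      · exact mul_nonneg_of_nonpos_of_nonpos (by linarith)
          (by linarith [one_le_pow₀ h (n := n + 1)])
    push_cast
    calc ((n : ℝ) + 1 + 1) * t ^ (n + 1) = t * ((n + 1) * t ^ n) + t ^ (n + 1) := by ring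
      _ ≤ t * (1 + n * t ^ (n + 1)) + t ^ (n + 1) := by gcongr
      _ ≤ 1 + (n + 1) * t ^ (n + 1 + 1) := by linear_combination hsign

/-- for `K ≥ 2` and `x ∈ (0,1]`,
`(1−K)(K+1)x^K + K²x^{K−1} < K+1`, i.e. the derivative
`p′(x) = (1−K)(K+1)x^K + K²x^{K−1} − (K+1)` of
`p(x) = (1−K)x^{K+1} + Kx^K − (K+1)x + K` is strictly negative on `(0,1]`. -/
theorem stmt_13 (K : ℕ) (hK : 2 ≤ K) :
    ∀ x ∈ Set.Ioc (0:ℝ) 1,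
      (1 - (K : ℝ)) * ((K : ℝ) + 1) * x ^ K + (K : ℝ) ^ 2 * x ^ (K - 1)
        < (K : ℝ) + 1 := by
  rintro x ⟨hx, -⟩
  obtain ⟨n, rfl⟩ : ∃ n, K = n + 1 := ⟨K - 1, by omega⟩
  have amgm := succ_mul_pow_le_one_add_mul_pow_succ hx.le n
  have hpos : 0 ≤ (n : ℝ) * x ^ (n + 1) := by positivity
  rw [Nat.add_sub_cancel]
  push_cast
  linear_combination (↑n + 1) * amgm + hpos + zero_lt_one' ℝ
end

section
/- Let K ≥ 2 be an integer and P > 0 a real number. Then there exists a real number φ ∈ [1, K] such that (1 + P·φ)^{K−1} = (1 + (P/K)·φ·(K − φ))^K. -/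
/-! At `φ = 1` the right-hand side dominates: this is Bernoulli's inequality
`(1 + P)^((K-1)/K) ≤ 1 + (K-1)/K · P` raised to the `K`-th power. At `φ = K` the right-hand
side is `1`, which the left-hand side dominates. Both sides are continuous in `φ`, so they
agree somewhere in `[1, K]`. -/

open Set

theorem one_add_pow_pred_le_one_add_mul_pow (K : ℕ) {P : ℝ} (hP : -1 ≤ P) :
    (1 + P) ^ (K - 1) ≤ (1 + (K - 1) / K * P) ^ K := by
  rcases Nat.eq_zero_or_pos K with rfl | hK
  · simp
  have hKpos : (0 : ℝ) < K := by exact_mod_cast hK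
  have hK1 : (1 : ℝ) ≤ K := by exact_mod_cast hK
  set p : ℝ := (K - 1) / K
  have hp0 : 0 ≤ p := div_nonneg (by linarith) hKpos.le
  have hp1 : p ≤ 1 := (div_le_one hKpos).2 (by linarith)
  have hbase : 0 ≤ 1 + P := by linarith
  have hexp : p * K = (K - 1 : ℕ) := by
    rw [Nat.cast_sub hK, Nat.cast_one]
    exact div_mul_cancel₀ _ hKpos.ne'
  calc (1 + P) ^ (K - 1) = ((1 + P) ^ p) ^ K := by
        rw [← Real.rpow_natCast _ K, ← Real.rpow_mul hbase, hexp, Real.rpow_natCast]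
    _ ≤ (1 + p * P) ^ K :=
        pow_le_pow_left₀ (Real.rpow_nonneg hbase p)
          (rpow_one_add_le_one_add_mul_self hP hp0 hp1) K

/-- existence of the parameter `φ ∈ [1,K]` solving
`(1 + Pφ)^{K−1} = (1 + (P/K)φ(K−φ))^K` for the optimized linear feedback
scheme for the symmetric `K`-user AWGN-BC with noiseless feedback. -/
theorem stmt_15 (K : ℕ) (hK : 2 ≤ K) (P : ℝ) (hP : 0 < P) :
    ∃ φ : ℝ, φ ∈ Set.Icc 1 (K : ℝ) ∧
      (1 + P * φ) ^ (K - 1) = (1 + (P / K) * φ * ((K : ℝ) - φ)) ^ K := by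
  have hK1 : (1 : ℝ) ≤ K := by exact_mod_cast (by omega : 1 ≤ K)
  have h_one : (1 + P * 1) ^ (K - 1) ≤ (1 + P / K * 1 * (K - 1)) ^ K := by
    convert one_add_pow_pred_le_one_add_mul_pow K (by linarith : -1 ≤ P) using 3
    · ring
    · field_simp
  have h_K : (1 + P / K * K * (K - K)) ^ K ≤ (1 + P * K) ^ (K - 1) := by
    rw [sub_self, mul_zero, add_zero, one_pow]
    exact one_le_pow₀ (by nlinarith)
  exact isPreconnected_Icc.intermediate_value₂ (left_mem_Icc.2 hK1) (right_mem_Icc.2 hK1)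
    (by fun_prop) (by fun_prop) h_one h_K
end

section
/- Let K ≥ 2 be an integer and P > 0 a real number, and let φ ∈ [1, K] satisfy (1 + P·φ)^{K−1} = (1 + (P/K)·φ·(K − φ))^K. Define β = (1 + P·φ)^{−1/(2K)}. Then β ∈ (0,1) and (1 − β^{2K})² = K·P·(1 − β²)·β^{2K}; equivalently, f(β) = P where f(β) = (1 − β^{2K})²/(K·(1 − β²)·β^{2K}). -/
/-!
Write `a = 1 + Pφ` and `b = 1 + (P/K)φ(K − φ)`. Then `β^{2K} = a⁻¹`, and taking `K`-th roots
in `a^{K−1} = b^K` gives `β² = a^{−1/K} = b/a`. The claimed identity thereby becomes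
`(a − 1)² = KP(a − b)`, and both sides equal `P²φ²`.
-/

namespace Real

theorem rpow_neg_inv_two_mul_sq {a : ℝ} (ha : 0 ≤ a) (x : ℝ) :
    (a ^ (-(1 / (2 * x)))) ^ 2 = a ^ (-(1 / x)) := by
  rw [← rpow_natCast, ← rpow_mul ha]
  congr 1
  push_cast
  ring

theorem rpow_neg_inv_two_mul_pow_two_mul {a : ℝ} (ha : 0 ≤ a) {n : ℕ} (hn : n ≠ 0) :
    (a ^ (-(1 / (2 * (n : ℝ))))) ^ (2 * n) = a⁻¹ := by
  rw [← rpow_natCast, ← rpow_mul ha, ← rpow_neg_one]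
  congr 1
  push_cast
  field_simp

theorem eq_rpow_div_of_pow_eq {a b : ℝ} (ha : 0 ≤ a) (hb : 0 ≤ b) {m n : ℕ} (hn : n ≠ 0)
    (h : a ^ m = b ^ n) : b = a ^ ((m : ℝ) / n) := by
  rw [← pow_rpow_inv_natCast hb hn, ← h, ← rpow_natCast, ← rpow_mul ha, div_eq_mul_inv]

theorem rpow_neg_inv_natCast_eq_div {a b : ℝ} (ha : 0 < a) (hb : 0 ≤ b) {n : ℕ} (hn : n ≠ 0)
    (h : a ^ (n - 1) = b ^ n) : a ^ (-(1 / (n : ℝ))) = b / a := by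
  rw [eq_rpow_div_of_pow_eq ha.le hb hn h, eq_div_iff ha.ne', ← rpow_add_one ha.ne']
  congr 1
  push_cast [Nat.one_le_iff_ne_zero.mpr hn]
  field_simp
  ring

end Real

theorem one_sub_inv_sq_eq_feedback_power {K P φ : ℝ} (hK : K ≠ 0) (ha : 1 + P * φ ≠ 0) :
    (1 - (1 + P * φ)⁻¹) ^ 2 =
      K * P * (1 - (1 + P / K * φ * (K - φ)) / (1 + P * φ)) * (1 + P * φ)⁻¹ := by
  field_simp
  ring

/-- the algebraic core of the noiseless-feedback sum-rate lemma:
if `φ ∈ [1,K]` solves `(1+Pφ)^{K−1} = (1+(P/K)φ(K−φ))^K` and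
`β = (1+Pφ)^{−1/(2K)}`, then `β ∈ (0,1)` and
`(1−β^{2K})² = KP(1−β²)β^{2K}`, equivalently `f(β) = P` where
`f(β) = (1−β^{2K})²/(K(1−β²)β^{2K})`. -/
theorem stmt_17 (K : ℕ) (hK : 2 ≤ K) (P : ℝ) (hP : 0 < P)
    (φ : ℝ) (hφ : φ ∈ Set.Icc 1 (K : ℝ))
    (heq : (1 + P * φ) ^ (K - 1) = (1 + (P / K) * φ * ((K : ℝ) - φ)) ^ K)
    (β : ℝ) (hβdef : β = (1 + P * φ) ^ (-(1 / (2 * (K : ℝ))))) :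
    β ∈ Set.Ioo (0:ℝ) 1 ∧
    (1 - β ^ (2 * K)) ^ 2 = (K : ℝ) * P * (1 - β ^ 2) * β ^ (2 * K) ∧
    (1 - β ^ (2 * K)) ^ 2 / ((K : ℝ) * (1 - β ^ 2) * β ^ (2 * K)) = P := by
  obtain ⟨hφ1, hφK⟩ := hφ
  have hK0 : K ≠ 0 := by omega
  have hKpos : (0 : ℝ) < K := Nat.cast_pos.mpr (by omega)
  have ha : 1 < 1 + P * φ := lt_add_of_pos_right 1 (mul_pos hP (by linarith))
  have hb : 0 ≤ 1 + P / K * φ * (K - φ) :=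
    add_nonneg zero_le_one (mul_nonneg (by positivity) (sub_nonneg.mpr hφK))
  have hβ0 : 0 < β := hβdef ▸ Real.rpow_pos_of_pos (by linarith) _
  have hβ1 : β < 1 := hβdef ▸ Real.rpow_lt_one_of_one_lt_of_neg ha (by simp [hKpos])
  have hpow : β ^ (2 * K) = (1 + P * φ)⁻¹ := by
    rw [hβdef, Real.rpow_neg_inv_two_mul_pow_two_mul (by linarith) hK0]
  have hsq : β ^ 2 = (1 + P / K * φ * (K - φ)) / (1 + P * φ) := by
    rw [hβdef, Real.rpow_neg_inv_two_mul_sq (by linarith),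
      Real.rpow_neg_inv_natCast_eq_div (by linarith) hb hK0 heq]
  have hmain : (1 - β ^ (2 * K)) ^ 2 = (K : ℝ) * P * (1 - β ^ 2) * β ^ (2 * K) := by
    rw [hpow, hsq]
    exact one_sub_inv_sq_eq_feedback_power hKpos.ne' (by linarith)
  have hden : (K : ℝ) * (1 - β ^ 2) * β ^ (2 * K) ≠ 0 := by
    have : β ^ 2 < 1 := pow_lt_one₀ hβ0.le hβ1 two_ne_zero
    exact (mul_pos (mul_pos hKpos (by linarith)) (by positivity)).ne'
  refine ⟨⟨hβ0, hβ1⟩, hmain, ?_⟩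
  rw [hmain]
  exact div_eq_of_eq_mul hden (by ring)
end
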